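/- For p > 2, f ≥ 0 and all w = (w₁,w₂), z = (z₁,z₂) ∈ [0,∞) × R, the sum J_p^{(+)}(w,z) + F_p(w,z) ≥ 0, where J_p^{(+)} is the second-order Taylor remainder of (z₁,z₂) ↦ z₁((z₂)₊)^{p-1}. -/

import Mathlib

noncomputable def norm2 (z : ℝ × ℝ) : ℝ := Real.sqrt (z.1 ^ 2 + z.2 ^ 2)

noncomputable def bregmanF2 (p : ℝ) (w z : ℝ × ℝ) : ℝ :=
  norm2 z ^ p - norm2 w ^ p -
    p * norm2 w ^ (p - 2) * (w.1 * (z.1 - w.1) + w.2 * (z.2 - w.2))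

noncomputable def Jplus (p : ℝ) (w z : ℝ × ℝ) : ℝ :=
  z.1 * (max z.2 0) ^ (p - 1) - w.1 * (max w.2 0) ^ (p - 1)
    - (max w.2 0) ^ (p - 1) * (z.1 - w.1)
    - (p - 1) * w.1 * (max w.2 0) ^ (p - 2) * (z.2 - w.2)

/-- 1D convexity-type inequality for `x ↦ (max x 0) ^ (p-1)`. -/
lemma key1d {p : ℝ} (hp : 2 < p) (b d : ℝ) :
    (p - 1) * (max b 0) ^ (p - 2) * (d - b) ≤ (max d 0) ^ (p - 1) - (max b 0) ^ (p - 1) := by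
  rcases le_or_gt b 0 with hb | hb
  · rw [max_eq_right hb, Real.zero_rpow (by linarith), Real.zero_rpow (by linarith)]
    have := Real.rpow_nonneg (le_max_right d 0) (p - 1)
    nlinarith
  · rw [max_eq_left hb.le]
    rcases le_or_gt d 0 with hd | hd
    · rw [max_eq_right hd, Real.zero_rpow (by linarith)]
      have h1 : b ^ (p - 2) * b = b ^ (p - 1) := by
        rw [← Real.rpow_add_one hb.ne']; ring_nf
      have h2 : (0:ℝ) ≤ b ^ (p - 2) := Real.rpow_nonneg hb.le _
      have h3 : (0:ℝ) ≤ b ^ (p - 1) := Real.rpow_nonneg hb.le _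
      nlinarith [mul_nonneg (mul_nonneg (by linarith : (0:ℝ) ≤ p - 1) h2) (neg_nonneg.2 hd)]
    · rw [max_eq_left hd.le]
      have hs : (-1:ℝ) ≤ (d - b) / b := by
        rw [le_div_iff₀ hb]; nlinarith
      have hber := one_add_mul_self_le_rpow_one_add hs (by linarith : (1:ℝ) ≤ p - 1)
      have h1 : (1 + (d - b) / b) = d / b := by field_simp; ring
      rw [h1] at hber
      have h2 : (d / b) ^ (p - 1) = d ^ (p - 1) / b ^ (p - 1) :=
        Real.div_rpow hd.le hb.le (p - 1)
      rw [h2] at hber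
      have hbp : (0:ℝ) < b ^ (p - 1) := Real.rpow_pos_of_pos hb _
      have key := mul_le_mul_of_nonneg_right hber hbp.le
      have h3 : d ^ (p - 1) / b ^ (p - 1) * b ^ (p - 1) = d ^ (p - 1) := by
        field_simp
      rw [h3] at key
      have h4 : b ^ (p - 2) * b = b ^ (p - 1) := by
        rw [← Real.rpow_add_one hb.ne']; ring_nf
      have h5 : (1 + (p - 1) * ((d - b) / b)) * b ^ (p - 1)
          = b ^ (p - 1) + (p - 1) * (d - b) * (b ^ (p - 1) / b) := by
        field_simp
      have h6 : b ^ (p - 1) / b = b ^ (p - 2) := by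
        rw [← h4]; field_simp
      rw [h5, h6] at key
      linarith

/-- Sum of two instances of Young's inequality. -/
lemma young2 {p : ℝ} (hp : 2 < p) {r s : ℝ} (hr : 0 ≤ r) (hs : 0 ≤ s) :
    r ^ (p - 1) * s + (p - 1) / 2 * (r ^ (p - 2) * s ^ 2 + r ^ p)
      ≤ s ^ p + (p - 1) * r ^ p := by
  have hp0 : (0:ℝ) < p := by linarith
  have hp1 : (0:ℝ) < p - 1 := by linarith
  have hp2 : (0:ℝ) < p - 2 := by linarith
  have hc1 : Real.HolderConjugate (p / (p - 1)) p := by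
    rw [Real.holderConjugate_iff]; constructor
    · rw [lt_div_iff₀ hp1]; linarith
    · field_simp; ring
  have y1 := Real.young_inequality_of_nonneg (Real.rpow_nonneg hr (p - 1)) hs hc1
  have e1 : (r ^ (p - 1)) ^ (p / (p - 1)) = r ^ p := by
    rw [← Real.rpow_mul hr]; congr 1; field_simp
  rw [e1] at y1
  have hc2 : Real.HolderConjugate (p / (p - 2)) (p / 2) := by
    rw [Real.holderConjugate_iff]; constructor
    · rw [lt_div_iff₀ hp2]; try linarith
    · field_simp; try ring
  have y2 := Real.young_inequality_of_nonneg (Real.rpow_nonneg hr (p - 2))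
    (Real.rpow_nonneg hs 2) hc2
  have e2 : (r ^ (p - 2)) ^ (p / (p - 2)) = r ^ p := by
    rw [← Real.rpow_mul hr]; congr 1; field_simp
  have e3 : (s ^ (2:ℝ)) ^ (p / 2) = s ^ p := by
    rw [← Real.rpow_mul hs]; congr 1; field_simp
  have e4 : s ^ (2:ℝ) = s ^ 2 := by
    rw [← Real.rpow_natCast s 2]; norm_num
  rw [e2, e3, e4] at y2
  have d1 : r ^ (p - 1) * s ≤ (p - 1) / p * r ^ p + s ^ p / p := by
    calc r ^ (p - 1) * s ≤ r ^ p / (p / (p - 1)) + s ^ p / p := y1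
      _ = (p - 1) / p * r ^ p + s ^ p / p := by field_simp; try ring
  have d2 : r ^ (p - 2) * s ^ 2 ≤ (p - 2) / p * r ^ p + 2 * s ^ p / p := by
    calc r ^ (p - 2) * s ^ 2 ≤ r ^ p / (p / (p - 2)) + s ^ p / (p / 2) := y2
      _ = (p - 2) / p * r ^ p + 2 * s ^ p / p := by field_simp; try ring
  have h1 : p * (r ^ (p - 1) * s) ≤ (p - 1) * r ^ p + s ^ p := by
    have := mul_le_mul_of_nonneg_left d1 hp0.le
    calc p * (r ^ (p - 1) * s) ≤ p * ((p - 1) / p * r ^ p + s ^ p / p) := this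
      _ = (p - 1) * r ^ p + s ^ p := by field_simp; try ring
  have h2 : p * (r ^ (p - 2) * s ^ 2) ≤ (p - 2) * r ^ p + 2 * s ^ p := by
    have := mul_le_mul_of_nonneg_left d2 hp0.le
    calc p * (r ^ (p - 2) * s ^ 2) ≤ p * ((p - 2) / p * r ^ p + 2 * s ^ p / p) := this
      _ = (p - 2) * r ^ p + 2 * s ^ p := by field_simp; try ring
  nlinarith [h1, h2, mul_le_mul_of_nonneg_left h2 hp1.le]

/-- Strong-convexity type lower bound for the Bregman remainder of `|·|^p`. -/
lemma Fbound {p : ℝ} (hp : 2 < p) (w z : ℝ × ℝ) :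
    (p - 1) / 2 * norm2 w ^ (p - 2) * ((z.1 - w.1) ^ 2 + (z.2 - w.2) ^ 2)
      ≤ bregmanF2 p w z := by
  obtain ⟨a, b⟩ := w
  obtain ⟨c, d⟩ := z
  unfold bregmanF2 norm2
  simp only
  set r := Real.sqrt (a ^ 2 + b ^ 2) with hrdef
  set s := Real.sqrt (c ^ 2 + d ^ 2) with hsdef
  have hr : 0 ≤ r := Real.sqrt_nonneg _
  have hs : 0 ≤ s := Real.sqrt_nonneg _
  have hr2 : r ^ 2 = a ^ 2 + b ^ 2 := Real.sq_sqrt (by positivity)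
  have hs2 : s ^ 2 = c ^ 2 + d ^ 2 := Real.sq_sqrt (by positivity)
  have hu : a * c + b * d ≤ r * s := by
    have h1 : a * c + b * d ≤ Real.sqrt ((a * c + b * d) ^ 2) := by
      rw [Real.sqrt_sq_eq_abs]; exact le_abs_self _
    have h2 : Real.sqrt ((a * c + b * d) ^ 2)
        ≤ Real.sqrt ((a ^ 2 + b ^ 2) * (c ^ 2 + d ^ 2)) := by
      apply Real.sqrt_le_sqrt; nlinarith [sq_nonneg (a * d - b * c)]
    have h3 : Real.sqrt ((a ^ 2 + b ^ 2) * (c ^ 2 + d ^ 2)) = r * s :=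
      Real.sqrt_mul (by positivity) _
    linarith
  rcases eq_or_lt_of_le hr with hr0 | hr0
  · have ha : a = 0 := by nlinarith
    have hb : b = 0 := by nlinarith
    rw [← hr0, Real.zero_rpow (by linarith : p - 2 ≠ 0),
      Real.zero_rpow (by linarith : p ≠ 0), ha, hb]
    simp
    positivity
  · have eA : r ^ (p - 2) * r = r ^ (p - 1) := by
      rw [← Real.rpow_add_one hr0.ne']; ring_nf
    have eB : r ^ (p - 2) * r ^ 2 = r ^ p := by
      rw [← Real.rpow_natCast r 2, ← Real.rpow_add hr0]; norm_num
    have hX : r ^ (p - 2) * (a * c + b * d) ≤ r ^ (p - 1) * s := by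
      calc r ^ (p - 2) * (a * c + b * d) ≤ r ^ (p - 2) * (r * s) :=
            mul_le_mul_of_nonneg_left hu (Real.rpow_nonneg hr _)
        _ = r ^ (p - 1) * s := by rw [← eA]; ring
    have y := young2 hp hr hs
    have eq1 : a * (c - a) + b * (d - b) = (a * c + b * d) - r ^ 2 := by
      linear_combination hr2
    have eq2 : (c - a) ^ 2 + (d - b) ^ 2 = s ^ 2 + r ^ 2 - 2 * (a * c + b * d) := by
      linear_combination -hs2 - hr2
    rw [eq1, eq2]
    nlinarith [hX, y, eB, Real.rpow_nonneg hr (p - 2)]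

lemma combine_aux (p t T X Y Jp F : ℝ) (hp1 : 0 < p - 1) (ht : 0 ≤ t) (htT : t ≤ T)
    (hJ : (p - 1) * t * Y * X ≤ Jp) (hF : (p - 1) / 2 * T * (X ^ 2 + Y ^ 2) ≤ F) :
    0 ≤ Jp + F := by
  nlinarith [mul_nonneg (mul_nonneg hp1.le ht) (sq_nonneg (X + Y)),
    mul_nonneg (mul_nonneg hp1.le (sub_nonneg.2 htT)) (add_nonneg (sq_nonneg X) (sq_nonneg Y))]

theorem Jplus_add_bregman_nonneg (p : ℝ) (hp : 2 < p) (w z : ℝ × ℝ)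
    (hw : 0 ≤ w.1) (hz : 0 ≤ z.1) :
    0 ≤ Jplus p w z + bregmanF2 p w z := by
  have hp1 : (0:ℝ) < p - 1 := by linarith
  have hJ : (p - 1) * (max w.2 0) ^ (p - 2) * (z.2 - w.2) * (z.1 - w.1) ≤ Jplus p w z := by
    have hk := key1d hp w.2 z.2
    have hc := mul_le_mul_of_nonneg_left hk hz
    unfold Jplus
    nlinarith [hc]
  have hF := Fbound hp w z
  have hBr : max w.2 0 ≤ norm2 w := by
    apply max_le
    · calc w.2 ≤ |w.2| := le_abs_self _
        _ = Real.sqrt (w.2 ^ 2) := (Real.sqrt_sq_eq_abs _).symm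
        _ ≤ norm2 w := Real.sqrt_le_sqrt (by nlinarith [sq_nonneg w.1])
    · exact Real.sqrt_nonneg _
  have htT : (max w.2 0) ^ (p - 2) ≤ norm2 w ^ (p - 2) :=
    Real.rpow_le_rpow (le_max_right _ _) hBr (by linarith)
  have ht : (0:ℝ) ≤ (max w.2 0) ^ (p - 2) := Real.rpow_nonneg (le_max_right _ _) _
  exact combine_aux p _ _ _ _ _ _ hp1 ht htT hJ hF
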